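/- Let μ be the distribution on [0,1]² placing mass 1/3 on each of the points (0,5/8), (3/8,3/8), (5/8,1). If (S,B) ∼ μ, then for every price p ∈ [1/2,1], E[fgft(5/16,S,B)] − E[fgft(p,S,B)] ≥ 1/24. -/
import Mathlib


open MeasureTheory ENNReal

noncomputable def fgft (p s b : ℝ) : ℝ := min (max (p - s) 0) (max (b - p) 0)

/-- μ places mass 1/3 on each of (0,5/8), (3/8,3/8), (5/8,1) -/
noncomputable def muDist : Measure (ℝ × ℝ) :=
  ((1:ℝ≥0∞)/3) • Measure.dirac (0, 5/8) + ((1:ℝ≥0∞)/3) • Measure.dirac (3/8, 3/8)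
    + ((1:ℝ≥0∞)/3) • Measure.dirac (5/8, 1)

lemma integrable_dirac' {α E : Type*} [MeasurableSpace α] [MeasurableSingletonClass α]
    [NormedAddCommGroup E] (f : α → E) (a : α) : Integrable f (Measure.dirac a) :=
  (integrable_const (f a)).congr (ae_eq_dirac f).symm

lemma integral_muDist (f : ℝ × ℝ → ℝ) :
    (∫ x, f x ∂muDist) =
      (1/3) * f (0, 5/8) + (1/3) * f (3/8, 3/8) + (1/3) * f (5/8, 1) := by
  have h3 : ((1:ℝ≥0∞)/3) ≠ ⊤ := by norm_num
  have hi : ∀ a : ℝ × ℝ, Integrable f (((1:ℝ≥0∞)/3) • Measure.dirac a) :=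
    fun a => (integrable_dirac' f a).smul_measure h3
  rw [muDist, integral_add_measure (((hi _).add_measure (hi _))) (hi _),
    integral_add_measure (hi _) (hi _)]
  simp only [integral_smul_measure, integral_dirac, smul_eq_mul]
  rw [ENNReal.toReal_div]
  norm_num

theorem mu_gap (p : ℝ) (hp : p ∈ Set.Icc (1/2 : ℝ) 1) :
    (∫ x, fgft (5/16) x.1 x.2 ∂muDist) - (∫ x, fgft p x.1 x.2 ∂muDist) ≥ 1/24 := by
  obtain ⟨hp1, hp2⟩ := hp
  rw [integral_muDist (fun x => fgft (5/16) x.1 x.2), integral_muDist (fun x => fgft p x.1 x.2)]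
  simp only [fgft]
  have hA0 : (0:ℝ) ≤ (p ⊔ 0) ⊓ ((5/8 - p) ⊔ 0) := le_min (le_max_right _ _) (le_max_right _ _)
  have hB0 : (0:ℝ) ≤ ((p - 3/8) ⊔ 0) ⊓ ((3/8 - p) ⊔ 0) := le_min (le_max_right _ _) (le_max_right _ _)
  have hC0 : (0:ℝ) ≤ ((p - 5/8) ⊔ 0) ⊓ ((1 - p) ⊔ 0) := le_min (le_max_right _ _) (le_max_right _ _)
  have hB : ((p - 3/8) ⊔ 0) ⊓ ((3/8 - p) ⊔ 0) ≤ 0 :=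
    le_trans (min_le_right _ _) (max_le (by linarith) le_rfl)
  rcases le_total p (5/8) with h | h
  · have hA : (p ⊔ 0) ⊓ ((5/8 - p) ⊔ 0) ≤ 1/8 :=
      le_trans (min_le_right _ _) (max_le (by linarith) (by norm_num))
    have hC : ((p - 5/8) ⊔ 0) ⊓ ((1 - p) ⊔ 0) ≤ 0 :=
      le_trans (min_le_left _ _) (max_le (by linarith) le_rfl)
    norm_num
    linarith
  · have hA : (p ⊔ 0) ⊓ ((5/8 - p) ⊔ 0) ≤ 0 :=
      le_trans (min_le_right _ _) (max_le (by linarith) le_rfl)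
    have hC1 : ((p - 5/8) ⊔ 0) ⊓ ((1 - p) ⊔ 0) ≤ p - 5/8 :=
      le_trans (min_le_left _ _) (max_le le_rfl (by linarith))
    have hC2 : ((p - 5/8) ⊔ 0) ⊓ ((1 - p) ⊔ 0) ≤ 1 - p :=
      le_trans (min_le_right _ _) (max_le le_rfl (by linarith))
    norm_num
    linarith
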